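/- arXiv:2410.01324 — 3 statements merged into one kernel-verified Lean document; each statement's English description precedes it below -/
import Mathlib

section
/- Let E be a real inner product space, let ℓ₁ ℓ₂ : ℝ, and let g₁, g₂, d ∈ E with ℓ₁ < ℓ₂, ⟪g₁, d⟫ > 0, and ⟪g₂, d⟫ < 0. Define the approximated disparity D(η) = |(ℓ₁ − η⟪g₁, d⟫) − (ℓ₂ − η⟪g₂, d⟫)|. Then D is strictly monotonically increasing on [0, ∞): for all 0 ≤ η₁ < η₂ we have D(η₁) < D(η₂). -/
open RealInnerProductSpace

/-- Sharpening of Theorem 1: under the sufficient condition for unfair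
forgetting, the first-order-approximated loss disparity
`D(η) = |(ℓ₁ − η⟪g₁, d⟫) − (ℓ₂ − η⟪g₂, d⟫)|` is strictly increasing in the
step size `η` on `[0, ∞)`. -/
theorem disparity_strict_mono_in_step_size
    {E : Type*} [NormedAddCommGroup E] [InnerProductSpace ℝ E]
    (ℓ₁ ℓ₂ : ℝ) (g₁ g₂ d : E)
    (hloss : ℓ₁ < ℓ₂)
    (h₁ : 0 < ⟪g₁, d⟫)
    (h₂ : ⟪g₂, d⟫ < 0)
    (D : ℝ → ℝ)
    (hD : ∀ η, D η = |(ℓ₁ - η * ⟪g₁, d⟫) - (ℓ₂ - η * ⟪g₂, d⟫)|) :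
    ∀ η₁ η₂ : ℝ, 0 ≤ η₁ → η₁ < η₂ → D η₁ < D η₂ := by
  intro η₁ η₂ h0 h12
  have key : ∀ η : ℝ, 0 ≤ η →
      D η = η * (⟪g₁, d⟫ - ⟪g₂, d⟫) + (ℓ₂ - ℓ₁) := by
    intro η hη
    rw [hD]
    rw [abs_of_nonpos (by nlinarith)]
    ring
  rw [key η₁ h0, key η₂ (h0.trans h12.le)]
  nlinarith
end

section
/- Let E be a real inner product space, let F₁, F₂ : E → ℝ be differentiable at θ ∈ E, and let v ∈ E. Suppose F₁(θ) < F₂(θ), ⟪∇F₁(θ), v⟫ > 0, and ⟪∇F₂(θ), v⟫ < 0. Then there exists η₀ > 0 such that for all η with 0 < η < η₀, |F₁(θ − η·v) − F₂(θ − η·v)| > |F₁(θ) − F₂(θ)|. -/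
open RealInnerProductSpace Topology Filter

/-- Exact small-step version of Theorem 1: if the overperforming group's loss
`F₁` is smaller than the underperforming group's loss `F₂` at `θ`, the update
direction `v` is positively aligned with `∇F₁(θ)` and negatively aligned with
`∇F₂(θ)`, then the true loss disparity strictly increases for all sufficiently
small learning rates. -/
theorem small_step_increases_true_disparity
    {E : Type*} [NormedAddCommGroup E] [InnerProductSpace ℝ E] [CompleteSpace E]
    (F₁ F₂ : E → ℝ) (θ : E)
    (hF₁ : DifferentiableAt ℝ F₁ θ) (hF₂ : DifferentiableAt ℝ F₂ θ)
    (v : E)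
    (hloss : F₁ θ < F₂ θ)
    (h₁ : 0 < ⟪gradient F₁ θ, v⟫)
    (h₂ : ⟪gradient F₂ θ, v⟫ < 0) :
    ∃ η₀ > 0, ∀ η : ℝ, 0 < η → η < η₀ →
      |F₁ (θ - η • v) - F₂ (θ - η • v)| > |F₁ θ - F₂ θ| := by
  set g : ℝ → ℝ := fun η => F₂ (θ - η • v) - F₁ (θ - η • v) with hg
  have hpath : HasDerivAt (fun η : ℝ => θ - η • v) (-v) 0 := by
    simpa using ((hasDerivAt_id (0:ℝ)).smul_const v).const_sub θ
  have h0 : θ - (0:ℝ) • v = θ := by simp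
  have hd2 : HasDerivAt (fun η : ℝ => F₂ (θ - η • v)) (-⟪gradient F₂ θ, v⟫) 0 := by
    have := ((h0.symm ▸ hF₂.hasGradientAt.hasFDerivAt).comp_hasDerivAt 0 hpath)
    simpa [InnerProductSpace.toDual_apply_apply, inner_neg_right, Function.comp_def] using this
  have hd1 : HasDerivAt (fun η : ℝ => F₁ (θ - η • v)) (-⟪gradient F₁ θ, v⟫) 0 := by
    have := ((h0.symm ▸ hF₁.hasGradientAt.hasFDerivAt).comp_hasDerivAt 0 hpath)
    simpa [InnerProductSpace.toDual_apply_apply, inner_neg_right, Function.comp_def] using this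
  have hdg : HasDerivAt g (⟪gradient F₁ θ, v⟫ - ⟪gradient F₂ θ, v⟫) 0 := by
    simpa [hg, sub_eq_add_neg, add_comm] using hd2.fun_sub hd1
  have hdpos : 0 < ⟪gradient F₁ θ, v⟫ - ⟪gradient F₂ θ, v⟫ := by linarith
  have hslope := hasDerivAt_iff_tendsto_slope.mp hdg
  have hev : ∀ᶠ η in 𝓝[≠] (0:ℝ), 0 < slope g 0 η :=
    hslope (eventually_gt_nhds hdpos)
  have hev' : ∀ᶠ η in 𝓝[>] (0:ℝ), 0 < slope g 0 η :=
    nhdsWithin_mono 0 (fun x hx => ne_of_gt hx) hev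
  rw [eventually_nhdsWithin_iff] at hev'
  rcases Metric.eventually_nhds_iff.mp hev' with ⟨ε, hε, hball⟩
  refine ⟨ε, hε, fun η hη hηε => ?_⟩
  have hs : 0 < slope g 0 η := by
    apply hball (by simpa [abs_of_pos hη] using hηε) hη
  have hgη : g 0 < g η := by
    have hs' : 0 < (g η - g 0) / η := by simpa [slope_def_field] using hs
    rcases div_pos_iff.mp hs' with ⟨h,_⟩ | ⟨_,h⟩ <;> linarith
  have hg0 : 0 < g 0 := by simp only [hg]; simp [h0]; linarith
  have hgpos : 0 < g η := lt_trans hg0 hgη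
  have e1 : |F₁ (θ - η • v) - F₂ (θ - η • v)| = g η := by
    rw [abs_sub_comm]; exact abs_of_pos hgpos
  have e0 : |F₁ θ - F₂ θ| = g 0 := by
    rw [abs_sub_comm, show F₂ θ - F₁ θ = g 0 by simp [hg, h0]]
    exact abs_of_pos hg0
  rw [gt_iff_lt, e1, e0]; exact hgη
end

section
/- Let I be a finite index set and y, ŷ, z : I → {0,1}. With m(y₀, z₀), m(*, z₀), and S(y₀, z₀) as the group count, group size, and scaled group error respectively, assume m(*, 0) > 0, m(*, 1) > 0, and suppose that for every class y₀ ∈ {0,1} both (a) m(y₀, 0)/m(*, 0) = m(y₀, 1)/m(*, 1) and (b) S(y₀, 0) = S(y₀, 1) hold. Then demographic parity holds: for every y₀ ∈ {0,1}, |{i : ŷ(i) = y₀ ∧ z(i) = 0}| / m(*, 0) = |{i : ŷ(i) = y₀ ∧ z(i) = 1}| / m(*, 1). -/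
open Finset

/-- Number of points with true label `y₀` in sensitive group `z₀`, as a real. -/
noncomputable def mCount {I : Type*} [Fintype I] (y z : I → Bool) (y₀ z₀ : Bool) : ℝ :=
  ((Finset.univ.filter (fun i => y i = y₀ ∧ z i = z₀)).card : ℝ)

/-- Size of sensitive group `z₀`, as a real. -/
noncomputable def groupSize {I : Type*} [Fintype I] (z : I → Bool) (z₀ : Bool) : ℝ :=
  ((Finset.univ.filter (fun i => z i = z₀)).card : ℝ)

/-- Number of predictions of class `y₀` in sensitive group `z₀`, as a real. -/
noncomputable def predCount {I : Type*} [Fintype I] (yhat z : I → Bool) (y₀ z₀ : Bool) : ℝ :=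
  ((Finset.univ.filter (fun i => yhat i = y₀ ∧ z i = z₀)).card : ℝ)

/-- Scaled 0-1 group error: number of misclassified points with true label `y₀`
in group `z₀`, divided by the size of group `z₀`. -/
noncomputable def scaledErr {I : Type*} [Fintype I] (y yhat z : I → Bool) (y₀ z₀ : Bool) : ℝ :=
  ((Finset.univ.filter (fun i => y i = y₀ ∧ z i = z₀ ∧ yhat i ≠ y i)).card : ℝ) /
    groupSize z z₀

private lemma pred_eq {I : Type*} [Fintype I] (y yhat z : I → Bool) (y₀ z₀ : Bool) :
    predCount yhat z y₀ z₀ =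
      mCount y z y₀ z₀
        - ((Finset.univ.filter (fun i => y i = y₀ ∧ z i = z₀ ∧ yhat i ≠ y i)).card : ℝ)
        + ((Finset.univ.filter (fun i => y i = !y₀ ∧ z i = z₀ ∧ yhat i ≠ y i)).card : ℝ) := by
  unfold predCount mCount
  simp only [Finset.card_filter]
  push_cast
  rw [← Finset.sum_sub_distrib, ← Finset.sum_add_distrib]
  apply Finset.sum_congr rfl
  intro i _
  rcases Bool.eq_false_or_eq_true (y i) with h | h <;>
    rcases Bool.eq_false_or_eq_true (yhat i) with h' | h' <;>
    rcases Bool.eq_false_or_eq_true (z i) with h'' | h'' <;>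
    cases y₀ <;> cases z₀ <;> simp [h, h', h'']

/-- Sufficient condition for demographic parity (Appendix A.5), exact binary
case: if for every class the base rates within groups agree and the scaled 0-1
group losses agree across the two sensitive groups, then demographic parity
holds. -/
theorem demographic_parity_of_equal_scaled_losses
    {I : Type*} [Fintype I] (y yhat z : I → Bool)
    (hm0 : 0 < groupSize z false) (hm1 : 0 < groupSize z true)
    (hbase : ∀ y₀ : Bool,
      mCount y z y₀ false / groupSize z false = mCount y z y₀ true / groupSize z true)
    (herr : ∀ y₀ : Bool, scaledErr y yhat z y₀ false = scaledErr y yhat z y₀ true) :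
    ∀ y₀ : Bool,
      predCount yhat z y₀ false / groupSize z false =
        predCount yhat z y₀ true / groupSize z true := by
  intro y₀
  rw [pred_eq y yhat z y₀ false, pred_eq y yhat z y₀ true]
  have e1 := herr y₀
  have e2 := herr (!y₀)
  unfold scaledErr at e1 e2
  have h1 := hbase y₀
  field_simp at e1 e2 h1 ⊢
  nlinarith [hm0, hm1, mul_pos hm0 hm1]
end
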